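/- arXiv:1908.02633 — 3 statements merged into one kernel-verified Lean document; each statement's English description precedes it below -/
import Mathlib

section
/- Let P be a prop, C a symmetric monoidal category, and s a supply of P in C. Then every component of the associator ((a ⊗ b) ⊗ c ≅ a ⊗ (b ⊗ c)), of the left unitor (I ⊗ a ≅ a), of the right unitor (a ⊗ I ≅ a), and of the braiding (a ⊗ b ≅ b ⊗ a) of C, as well as their inverses, is an s-homomorphism. -/
/-!
For every `k`, the tensor power functor `c ↦ c^⊗k` is braided strong monoidal, with
structure isomorphisms `σ : c^⊗k ⊗ d^⊗k ≅ (c ⊗ d)^⊗k` and `σ : I ≅ I^⊗k`. Hence, for `φ`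
an associator, unitor or braiding, `φ^⊗k` is the same coherence isomorphism between
powers, conjugated by `σ`'s. Viewing each `s_c` as a functor out of the underlying
category of `P`, the supply axioms say exactly that the `σ`'s form natural isomorphisms
`s_c ⊗ s_d ≅ s_(c ⊗ d)` and `const I ≅ s_I`. So `k ↦ φ^⊗k` is the family of components
of a natural isomorphism, and naturality of `k ↦ f^⊗k` is precisely the condition that
`f` be an `s`-homomorphism.
-/

open CategoryTheory MonoidalCategory

universe v u

/-- A prop: a strict symmetric monoidal category whose objects are the natural numbers,
with tensor product of objects given by addition and unit `0`. -/
structure PROP where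
  Hom : ℕ → ℕ → Type
  id : ∀ m, Hom m m
  comp : ∀ {m n p}, Hom m n → Hom n p → Hom m p
  id_comp : ∀ {m n} (f : Hom m n), comp (id m) f = f
  comp_id : ∀ {m n} (f : Hom m n), comp f (id n) = f
  assoc : ∀ {m n p q} (f : Hom m n) (g : Hom n p) (h : Hom p q),
    comp (comp f g) h = comp f (comp g h)
  add : ∀ {m₁ n₁ m₂ n₂}, Hom m₁ n₁ → Hom m₂ n₂ → Hom (m₁ + m₂) (n₁ + n₂)
  add_id : ∀ m n, add (id m) (id n) = id (m + n)
  add_comp : ∀ {m₁ n₁ p₁ m₂ n₂ p₂} (f₁ : Hom m₁ n₁) (g₁ : Hom n₁ p₁)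
    (f₂ : Hom m₂ n₂) (g₂ : Hom n₂ p₂),
    add (comp f₁ g₁) (comp f₂ g₂) = comp (add f₁ f₂) (add g₁ g₂)
  add_assoc : ∀ {m₁ n₁ m₂ n₂ m₃ n₃} (f₁ : Hom m₁ n₁) (f₂ : Hom m₂ n₂) (f₃ : Hom m₃ n₃),
    HEq (add (add f₁ f₂) f₃) (add f₁ (add f₂ f₃))
  add_zero : ∀ {m n} (f : Hom m n), add f (id 0) = f
  zero_add : ∀ {m n} (f : Hom m n), HEq (add (id 0) f) f
  braid : ∀ m n, Hom (m + n) (n + m)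
  braid_naturality : ∀ {m₁ n₁ m₂ n₂} (f : Hom m₁ n₁) (g : Hom m₂ n₂),
    comp (add f g) (braid n₁ n₂) = comp (braid m₁ m₂) (add g f)
  symmetry : ∀ m n, comp (braid m n) (braid n m) = id (m + n)
  hexagon : ∀ m n p,
    HEq (braid (m + n) p)
      (comp (cast (by rw [Nat.add_assoc, Nat.add_assoc] :
              Hom (m + (n + p)) (m + (p + n)) = Hom ((m + n) + p) ((m + p) + n))
            (add (id m) (braid n p)))
        (add (braid m p) (id n)))

section

variable {C : Type u} [Category.{v} C] [MonoidalCategory C]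

/-- The left-bracketed `m`-fold tensor power of an object. -/
def pow (c : C) : ℕ → C
  | 0 => 𝟙_ C
  | n + 1 => pow c n ⊗ c

/-- The `m`-fold tensor power of a morphism. -/
def powHom {c d : C} (f : c ⟶ d) : ∀ m, pow c m ⟶ pow d m
  | 0 => 𝟙 _
  | m + 1 => powHom f m ⊗ₘ f

/-- The canonical coherence isomorphism `c^⊗m ⊗ c^⊗n ≅ c^⊗(m+n)`. -/
def powAdd (c : C) : ∀ m n, pow c m ⊗ pow c n ≅ pow c (m + n)
  | m, 0 => ρ_ (pow c m)
  | m, n + 1 => (α_ (pow c m) (pow c n) c).symm ≪≫ whiskerRightIso (powAdd c m n) c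

variable [SymmetricCategory C]

/-- The canonical "middle four exchange" coherence isomorphism. -/
def exch (a b e f : C) : (a ⊗ b) ⊗ (e ⊗ f) ≅ (a ⊗ e) ⊗ (b ⊗ f) :=
  α_ a b (e ⊗ f) ≪≫
    whiskerLeftIso a ((α_ b e f).symm ≪≫ whiskerRightIso (β_ b e) f ≪≫ α_ e b f) ≪≫
      (α_ a e (b ⊗ f)).symm

/-- The canonical coherence isomorphism `σ : c^⊗m ⊗ d^⊗m ≅ (c ⊗ d)^⊗m`. -/
def powMul (c d : C) : ∀ m, pow c m ⊗ pow d m ≅ pow (c ⊗ d) m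
  | 0 => λ_ (𝟙_ C)
  | m + 1 => exch (pow c m) c (pow d m) d ≪≫ whiskerRightIso (powMul c d m) (c ⊗ d)

/-- The canonical coherence isomorphism `σ : I ≅ I^⊗m`. -/
def powUnit : ∀ m, (𝟙_ C) ≅ (pow (𝟙_ C : C) m)
  | 0 => Iso.refl _
  | m + 1 => powUnit m ≪≫ (ρ_ _).symm

end

/-- A supply of a prop `P` in a symmetric monoidal category `C`:
for each object `c` a strong symmetric monoidal functor `s_c : P ⥤ C` with
`s_c m = c^⊗m`, whose structure isomorphisms are the canonical coherence isos
(fields `map_id`, `map_comp`, `map_add`, `map_braid`), and which is compatible with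
the monoidal product and unit of `C` (fields `tensor` and `unit`). -/
structure Supply (P : PROP) (C : Type u) [Category.{v} C] [MonoidalCategory C]
    [SymmetricCategory C] where
  map : ∀ (c : C) {m n : ℕ}, P.Hom m n → (pow c m ⟶ pow c n)
  map_id : ∀ (c : C) (m : ℕ), map c (P.id m) = 𝟙 (pow c m)
  map_comp : ∀ (c : C) {m n p : ℕ} (μ : P.Hom m n) (ν : P.Hom n p),
    map c (P.comp μ ν) = map c μ ≫ map c ν
  map_add : ∀ (c : C) {m₁ n₁ m₂ n₂ : ℕ} (μ : P.Hom m₁ n₁) (ν : P.Hom m₂ n₂),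
    (powAdd c m₁ m₂).hom ≫ map c (P.add μ ν) = (map c μ ⊗ₘ map c ν) ≫ (powAdd c n₁ n₂).hom
  map_braid : ∀ (c : C) (m n : ℕ),
    map c (P.braid m n) =
      (powAdd c m n).inv ≫ (β_ (pow c m) (pow c n)).hom ≫ (powAdd c n m).hom
  tensor : ∀ (c d : C) {m n : ℕ} (μ : P.Hom m n),
    (map c μ ⊗ₘ map d μ) ≫ (powMul c d n).hom = (powMul c d m).hom ≫ map (c ⊗ d) μ
  unit : ∀ {m n : ℕ} (μ : P.Hom m n),
    (powUnit m).hom ≫ map (𝟙_ C) μ = (powUnit n).hom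

/-- `f : c ⟶ d` is an `s`-homomorphism. -/
def Supply.IsHomomorphism {P : PROP} {C : Type u} [Category.{v} C] [MonoidalCategory C]
    [SymmetricCategory C] (s : Supply P C) {c d : C} (f : c ⟶ d) : Prop :=
  ∀ {m n : ℕ} (μ : P.Hom m n), powHom f m ≫ s.map d μ = s.map c μ ≫ powHom f n

section Powers

variable {C : Type u} [Category.{v} C] [MonoidalCategory C]

theorem powHom_id (c : C) : ∀ k, powHom (𝟙 c) k = 𝟙 (pow c k)
  | 0 => rfl
  | k + 1 => by simp [powHom, powHom_id c k, pow]

theorem powHom_comp {c d e : C} (f : c ⟶ d) (g : d ⟶ e) :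
    ∀ k, powHom (f ≫ g) k = powHom f k ≫ powHom g k
  | 0 => (Category.comp_id _).symm
  | k + 1 => by
    dsimp only [powHom, pow]
    rw [powHom_comp f g k, tensorHom_comp_tensorHom]

def powFunctor (k : ℕ) : C ⥤ C where
  obj c := pow c k
  map f := powHom f k
  map_id c := powHom_id c k
  map_comp f g := powHom_comp f g k

theorem powUnit_succ_hom (k : ℕ) :
    (powUnit (k + 1)).hom = (λ_ (𝟙_ C)).inv ≫ ((powUnit k).hom ⊗ₘ 𝟙 (𝟙_ C)) := by
  change (powUnit k).hom ≫ (ρ_ _).inv = _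
  rw [rightUnitor_inv_naturality, unitors_inv_equal, tensorHom_id]

variable [SymmetricCategory C]

theorem exch_hom (a b e f : C) : (exch a b e f).hom = tensorμ a b e f := by
  simp [exch, tensorμ]

theorem powMul_succ_hom (c d : C) (k : ℕ) :
    (powMul c d (k + 1)).hom =
      tensorμ (pow c k) c (pow d k) d ≫ (powMul c d k).hom ▷ (c ⊗ d) := by
  change (exch _ _ _ _).hom ≫ _ = _
  rw [exch_hom]
  rfl

theorem powMul_natural {c c' d d' : C} (f : c ⟶ c') (g : d ⟶ d') :
    ∀ k, (powHom f k ⊗ₘ powHom g k) ≫ (powMul c' d' k).hom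
      = (powMul c d k).hom ≫ powHom (f ⊗ₘ g) k
  | 0 => by simp [powHom, powMul, pow]
  | k + 1 => by
    dsimp only [powHom, pow]
    rw [powMul_succ_hom, powMul_succ_hom, tensorμ_natural_assoc,
      ← tensorHom_id, ← tensorHom_id, tensorHom_comp_tensorHom, Category.assoc,
      tensorHom_comp_tensorHom, powMul_natural f g k, Category.comp_id, Category.id_comp]

theorem braiding_tensorμ (X₁ X₂ Y₁ Y₂ : C) :
    (β_ (X₁ ⊗ X₂) (Y₁ ⊗ Y₂)).hom ≫ tensorμ Y₁ Y₂ X₁ X₂ =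
      tensorμ X₁ X₂ Y₁ Y₂ ≫ ((β_ X₁ Y₁).hom ⊗ₘ (β_ X₂ Y₂).hom) := by
  simp only [tensorμ, BraidedCategory.braiding_tensor_right_hom,
    BraidedCategory.braiding_tensor_left_hom, comp_whiskerRight, whisker_assoc,
    MonoidalCategory.whiskerLeft_comp, Category.assoc, pentagon_assoc,
    pentagon_inv_hom_hom_hom_inv_assoc, Iso.inv_hom_id_assoc, whiskerLeft_hom_inv_assoc]
  slice_lhs 11 12 =>
    rw [← MonoidalCategory.whiskerLeft_comp, ← comp_whiskerRight, SymmetricCategory.symmetry]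
  simp only [MonoidalCategory.tensorHom_def, id_whiskerRight, MonoidalCategory.whiskerLeft_id,
    Category.id_comp]
  monoidal

theorem powMul_braided (a b : C) :
    ∀ k, (powMul a b k).hom ≫ powHom (β_ a b).hom k
      = (β_ (pow a k) (pow b k)).hom ≫ (powMul b a k).hom
  | 0 => by
    simp [pow, powMul, powHom, unitors_equal, unitors_inv_equal]
  | k + 1 => by
    dsimp only [powHom, pow]
    simp only [powMul_succ_hom, Category.assoc]
    rw [← Category.assoc (β_ _ _).hom, braiding_tensorμ, Category.assoc]
    congr 1
    rw [← tensorHom_id, ← tensorHom_id, tensorHom_comp_tensorHom, tensorHom_comp_tensorHom,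
      powMul_braided a b k, Category.comp_id, Category.id_comp]

theorem powMul_left_unitality (a : C) :
    ∀ k, (λ_ (pow a k)).hom
      = (powUnit k).hom ▷ pow a k ≫ (powMul (𝟙_ C) a k).hom ≫ powHom (λ_ a).hom k
  | 0 => by simp [powUnit, powMul, powHom, pow]
  | k + 1 => by
    dsimp only [powHom, pow]
    simp only [tensor_left_unitality, powMul_succ_hom, powUnit_succ_hom, comp_whiskerRight,
      Category.assoc]
    congr 1
    rw [tensorμ_natural_left_assoc]
    congr 1
    rw [id_whiskerRight, ← tensorHom_id (powMul _ _ k).hom, tensorHom_comp_tensorHom,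
      tensorHom_comp_tensorHom, ← powMul_left_unitality a k, Category.id_comp, Category.id_comp]

theorem powMul_right_unitality (a : C) :
    ∀ k, (ρ_ (pow a k)).hom
      = pow a k ◁ (powUnit k).hom ≫ (powMul a (𝟙_ C) k).hom ≫ powHom (ρ_ a).hom k
  | 0 => by simp [powUnit, powMul, powHom, pow, unitors_equal]
  | k + 1 => by
    dsimp only [powHom, pow]
    simp only [tensor_right_unitality, powMul_succ_hom, powUnit_succ_hom,
      MonoidalCategory.whiskerLeft_comp, Category.assoc]
    congr 1
    rw [tensorμ_natural_right_assoc]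
    congr 1
    rw [MonoidalCategory.whiskerLeft_id, ← tensorHom_id (powMul _ _ k).hom,
      tensorHom_comp_tensorHom, tensorHom_comp_tensorHom, ← powMul_right_unitality a k,
      Category.id_comp, Category.id_comp]

theorem powMul_associativity (a b c : C) :
    ∀ k, (powMul a b k).hom ▷ pow c k ≫ (powMul (a ⊗ b) c k).hom ≫ powHom (α_ a b c).hom k
      = (α_ (pow a k) (pow b k) (pow c k)).hom ≫ pow a k ◁ (powMul b c k).hom ≫
          (powMul a (b ⊗ c) k).hom
  | 0 => by
    dsimp [pow, powMul, powHom]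
    monoidal
  | k + 1 => by
    have key : ((powMul a b k).hom ▷ pow c k ⊗ₘ 𝟙 (a ⊗ b) ▷ c) ≫
          (powMul (a ⊗ b) c k).hom ▷ ((a ⊗ b) ⊗ c) ≫
          (powHom (α_ a b c).hom k ⊗ₘ (α_ a b c).hom)
        = ((α_ (pow a k) (pow b k) (pow c k)).hom ⊗ₘ (α_ a b c).hom) ≫
          (pow a k ◁ (powMul b c k).hom ⊗ₘ a ◁ 𝟙 (b ⊗ c)) ≫
          (powMul a (b ⊗ c) k).hom ▷ (a ⊗ (b ⊗ c)) := by
      rw [← tensorHom_id (powMul (a ⊗ b) c k).hom, ← tensorHom_id (powMul a (b ⊗ c) k).hom,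
        tensorHom_comp_tensorHom, tensorHom_comp_tensorHom, tensorHom_comp_tensorHom,
        tensorHom_comp_tensorHom, powMul_associativity a b c k]
      simp
    dsimp only [powHom, pow]
    rw [powMul_succ_hom, powMul_succ_hom, powMul_succ_hom, powMul_succ_hom,
      comp_whiskerRight, Category.assoc, Category.assoc,
      ← tensorHom_id (powMul a b k).hom (a ⊗ b), tensorμ_natural_left_assoc,
      key, tensor_associativity_assoc, MonoidalCategory.whiskerLeft_comp, Category.assoc,
      ← tensorHom_id (powMul b c k).hom, tensorμ_natural_right_assoc]

instance (k : ℕ) : (powFunctor k : C ⥤ C).Monoidal :=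
  Functor.CoreMonoidal.toMonoidal
    { εIso := powUnit k
      μIso := fun c d => powMul c d k
      μIso_hom_natural_left := fun f c => by
        have h := powMul_natural f (𝟙 c) k
        rwa [powHom_id, tensorHom_id, tensorHom_id] at h
      μIso_hom_natural_right := fun c f => by
        have h := powMul_natural (𝟙 c) f k
        rwa [powHom_id, id_tensorHom, id_tensorHom] at h
      associativity := fun a b c => powMul_associativity a b c k
      left_unitality := fun a => powMul_left_unitality a k
      right_unitality := fun a => powMul_right_unitality a k }

instance (k : ℕ) : (powFunctor k : C ⥤ C).Braided where
  braided a b := powMul_braided a b k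

end Powers

def PROP.Obj (_ : PROP) : Type := ℕ

instance (P : PROP) : Category P.Obj where
  Hom := P.Hom
  id := P.id
  comp := P.comp
  id_comp := P.id_comp
  comp_id := P.comp_id
  assoc := P.assoc

namespace Supply

variable {P : PROP} {C : Type u} [Category.{v} C] [MonoidalCategory C] [SymmetricCategory C]
  (s : Supply P C)

def functor (c : C) : P.Obj ⥤ C where
  obj k := pow c k
  map μ := s.map c μ
  map_id := s.map_id c
  map_comp := s.map_comp c

def tensorIso (c d : C) : s.functor c ⊗ s.functor d ≅ s.functor (c ⊗ d) :=
  NatIso.ofComponents (fun k => powMul c d k) fun μ => s.tensor c d μ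

def unitIso : 𝟙_ (P.Obj ⥤ C) ≅ s.functor (𝟙_ C) :=
  NatIso.ofComponents powUnit fun μ => (Category.id_comp _).trans (s.unit μ).symm

theorem isHomomorphism_hom_inv_of_natIso {c d : C} (e : c ≅ d) (τ : s.functor c ≅ s.functor d)
    (h : ∀ k, powHom e.hom k = τ.hom.app k) :
    s.IsHomomorphism e.hom ∧ s.IsHomomorphism e.inv := by
  have h' : ∀ k, powHom e.inv k = τ.inv.app k := fun k =>
    congrArg Iso.inv (Iso.ext (h k) : (powFunctor k).mapIso e = τ.app k)
  refine ⟨fun μ => ?_, fun μ => ?_⟩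
  · rw [h, h]
    exact (τ.hom.naturality μ).symm
  · rw [h', h']
    exact (τ.inv.naturality μ).symm

theorem isHomomorphism_associator (a b c : C) :
    s.IsHomomorphism (α_ a b c).hom ∧ s.IsHomomorphism (α_ a b c).inv :=
  s.isHomomorphism_hom_inv_of_natIso _
    ((s.tensorIso _ c).symm ≪≫ whiskerRightIso (s.tensorIso a b).symm _ ≪≫ α_ _ _ _ ≪≫
      whiskerLeftIso _ (s.tensorIso b c) ≪≫ s.tensorIso a _)
    fun k => Functor.Monoidal.map_associator (powFunctor k) a b c

theorem isHomomorphism_leftUnitor (a : C) :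
    s.IsHomomorphism (λ_ a).hom ∧ s.IsHomomorphism (λ_ a).inv :=
  s.isHomomorphism_hom_inv_of_natIso _
    ((s.tensorIso _ a).symm ≪≫ whiskerRightIso s.unitIso.symm _ ≪≫ λ_ _)
    fun k => Functor.Monoidal.map_leftUnitor (powFunctor k) a

theorem isHomomorphism_rightUnitor (a : C) :
    s.IsHomomorphism (ρ_ a).hom ∧ s.IsHomomorphism (ρ_ a).inv :=
  s.isHomomorphism_hom_inv_of_natIso _
    ((s.tensorIso a _).symm ≪≫ whiskerLeftIso _ s.unitIso.symm ≪≫ ρ_ _)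
    fun k => Functor.Monoidal.map_rightUnitor (powFunctor k) a

theorem isHomomorphism_braiding (a b : C) :
    s.IsHomomorphism (β_ a b).hom ∧ s.IsHomomorphism (β_ a b).inv :=
  s.isHomomorphism_hom_inv_of_natIso _ ((s.tensorIso a b).symm ≪≫ β_ _ _ ≪≫ s.tensorIso b a)
    fun k => Functor.map_braiding (powFunctor k) a b

end Supply

/-- All components of the associators, unitors and braiding of `C`,
and their inverses, are `s`-homomorphisms for any supply `s` of a prop `P` in `C`. -/
theorem coherence_isos_are_homomorphisms (P : PROP) {C : Type u} [Category.{v} C]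
    [MonoidalCategory C] [SymmetricCategory C] (s : Supply P C) :
    (∀ a b c : C, s.IsHomomorphism (α_ a b c).hom ∧ s.IsHomomorphism (α_ a b c).inv) ∧
    (∀ a : C, s.IsHomomorphism (λ_ a).hom ∧ s.IsHomomorphism (λ_ a).inv) ∧
    (∀ a : C, s.IsHomomorphism (ρ_ a).hom ∧ s.IsHomomorphism (ρ_ a).inv) ∧
    (∀ a b : C, s.IsHomomorphism (β_ a b).hom ∧ s.IsHomomorphism (β_ a b).inv) :=
  ⟨s.isHomomorphism_associator, s.isHomomorphism_leftUnitor, s.isHomomorphism_rightUnitor,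
    s.isHomomorphism_braiding⟩
end

section
/- Let P and Q be props, let F : P → Q be a strict symmetric monoidal functor that is the identity on objects (a prop functor), and let s be a supply of Q in a symmetric monoidal category C. Then the family assigning to each object c of C the composite functor F ≫ s_c : P → C (with the monoidal structure isomorphisms inherited from s_c) is a supply of P in C. -/
open CategoryTheory MonoidalCategory

universe v u

/-- A prop functor: a strict symmetric monoidal functor between props that is the
identity on objects. -/
structure PropFunctor (P Q : PROP) where
  map : ∀ {m n : ℕ}, P.Hom m n → Q.Hom m n
  map_id : ∀ m, map (P.id m) = Q.id m
  map_comp : ∀ {m n p} (f : P.Hom m n) (g : P.Hom n p),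
    map (P.comp f g) = Q.comp (map f) (map g)
  map_add : ∀ {m₁ n₁ m₂ n₂} (f : P.Hom m₁ n₁) (g : P.Hom m₂ n₂),
    map (P.add f g) = Q.add (map f) (map g)
  map_braid : ∀ m n, map (P.braid m n) = Q.braid m n

def Supply.precomp {P Q : PROP} {C : Type u} [Category.{v} C] [MonoidalCategory C]
    [SymmetricCategory C] (s : Supply Q C) (F : PropFunctor P Q) : Supply P C where
  map c _ _ μ := s.map c (F.map μ)
  map_id c m := by rw [F.map_id, s.map_id]
  map_comp c _ _ _ μ ν := by rw [F.map_comp, s.map_comp]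
  map_add c _ _ _ _ μ ν := by rw [F.map_add, s.map_add]
  map_braid c m n := by rw [F.map_braid, s.map_braid]
  tensor c d _ _ μ := s.tensor c d (F.map μ)
  unit μ := s.unit (F.map μ)

/-- Composition with a prop functor `F : P ⟶ Q` carries a supply of `Q`
in `C` to a supply of `P` in `C`: the family `c ↦ F ≫ s_c` is a supply of `P` in `C`. -/
theorem supply_precomposition (P Q : PROP) (F : PropFunctor P Q) {C : Type u}
    [Category.{v} C] [MonoidalCategory C] [SymmetricCategory C] (s : Supply Q C) :
    ∃ t : Supply P C, ∀ (c : C) {m n : ℕ} (μ : P.Hom m n), t.map c μ = s.map c (F.map μ) :=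
  ⟨s.precomp F, fun _ _ _ _ => rfl⟩
end

section
/- Let P be a prop, let s be a supply of P in a symmetric monoidal category C, let t be a supply of P in a symmetric monoidal category D, and let (F, φ) : C → D be a strong symmetric monoidal functor that preserves the supply. If f : c → d is an s-homomorphism in C, then F(f) : F(c) → F(d) is a t-homomorphism in D. -/
open CategoryTheory MonoidalCategory

universe v u

section
variable {C : Type u} [Category.{v} C] [MonoidalCategory C]
  {D : Type*} [Category D] [MonoidalCategory D]

/-- The canonical isomorphism `(F c)^⊗m ≅ F (c^⊗m)` built from the structure
isomorphisms of a strong monoidal functor `F`. -/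
def powComparison (F : C ⥤ D) [F.Monoidal] (c : C) :
    ∀ m : ℕ, pow (F.obj c) m ≅ F.obj (pow c m)
  | 0 => Functor.Monoidal.εIso F
  | m + 1 => whiskerRightIso (powComparison F c m) (F.obj c) ≪≫
      Functor.Monoidal.μIso F (pow c m) c

end

/-- A strong symmetric monoidal functor `(F, φ) : C ⥤ D` preserves the supplies `s` and
`t` if `t_{F c}(μ) ≫ φ⁽ⁿ⁾_c = φ⁽ᵐ⁾_c ≫ F (s_c μ)` for all `c` and all `μ : m ⟶ n` in `P`,
where `φ⁽ᵐ⁾_c : (F c)^⊗m ≅ F (c^⊗m)` is the canonical isomorphism built from the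
structure isomorphisms of `F`. -/
def PreservesSupply {P : PROP} {C : Type u} [Category.{v} C] [MonoidalCategory C]
    [SymmetricCategory C] {D : Type*} [Category D] [MonoidalCategory D]
    [SymmetricCategory D] (s : Supply P C) (t : Supply P D)
    (F : C ⥤ D) [F.Braided] : Prop :=
  ∀ (c : C) {m n : ℕ} (μ : P.Hom m n),
    t.map (F.obj c) μ ≫ (powComparison F c n).hom =
      (powComparison F c m).hom ≫ F.map (s.map c μ)

theorem powComparison_hom_natural {C : Type u} [Category.{v} C] [MonoidalCategory C]
    {D : Type*} [Category D] [MonoidalCategory D] (F : C ⥤ D) [F.Monoidal]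
    {c d : C} (f : c ⟶ d) (m : ℕ) :
    powHom (F.map f) m ≫ (powComparison F d m).hom =
      (powComparison F c m).hom ≫ F.map (powHom f m) := by
  induction m with
  | zero => simp [powHom, powComparison, pow]
  | succ m ih =>
    simp only [powHom, powComparison, pow, Iso.trans_hom, whiskerRightIso_hom,
      Functor.Monoidal.μIso_hom]
    rw [tensorHom_comp_whiskerRight_assoc, ih, ← whiskerRight_comp_tensorHom_assoc,
      Functor.LaxMonoidal.μ_natural, Category.assoc]

/-- **Statement 13.** A supply-preserving strong symmetric monoidal functor sends
`s`-homomorphisms to `t`-homomorphisms. -/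
theorem preserves_homomorphisms {P : PROP} {C : Type u} [Category.{v} C]
    [MonoidalCategory C] [SymmetricCategory C] {D : Type*} [Category D]
    [MonoidalCategory D] [SymmetricCategory D] (s : Supply P C) (t : Supply P D)
    (F : C ⥤ D) [F.Braided] (hF : PreservesSupply s t F)
    {c d : C} (f : c ⟶ d) (hf : s.IsHomomorphism f) :
    t.IsHomomorphism (F.map f) := by
  intro m n μ
  rw [← cancel_mono (powComparison F d n).hom, Category.assoc, Category.assoc]
  calc powHom (F.map f) m ≫ t.map (F.obj d) μ ≫ (powComparison F d n).hom
      = (powHom (F.map f) m ≫ (powComparison F d m).hom) ≫ F.map (s.map d μ) := by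
        rw [hF d μ, Category.assoc]
    _ = (powComparison F c m).hom ≫ F.map (powHom f m ≫ s.map d μ) := by
        rw [powComparison_hom_natural, Category.assoc, F.map_comp]
    _ = ((powComparison F c m).hom ≫ F.map (s.map c μ)) ≫ F.map (powHom f n) := by
        rw [hf μ, F.map_comp, Category.assoc]
    _ = t.map (F.obj c) μ ≫ powHom (F.map f) n ≫ (powComparison F d n).hom := by
        rw [← hF c μ, Category.assoc, powComparison_hom_natural]
end
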